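/- arXiv:1509.00526 — 5 statements merged into one kernel-verified Lean document; each statement's English description precedes it below -/
import Mathlib

section
/- Let ℓ, n be positive integers, let r be a positive divisor of ℓ, and let g = (η, σ) ∈ G(ℓ,r,n) be an element whose permutation part σ has a fixed point (for n > 2 this holds for every reflection of G(ℓ,1,n) lying in G(ℓ,r,n)). Then every element of G(ℓ,r,n) that is conjugate to g inside G(ℓ,1,n) is already conjugate to g inside G(ℓ,r,n). -/
/-- The wreath product `G(ℓ,1,n) = (ℤ/ℓℤ)^n ⋊ S_n`, realized as pairs `(η, σ)`. -/
abbrev GW (ℓ n : ℕ) : Type := (Fin n → ZMod ℓ) × Equiv.Perm (Fin n)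

/-- Multiplication in `G(ℓ,1,n)`: `(η,σ)(η',σ') = (η + η'∘σ⁻¹, σσ')`. -/
def gmul {ℓ n : ℕ} (g h : GW ℓ n) : GW ℓ n :=
  (g.1 + fun i => h.1 (g.2⁻¹ i), g.2 * h.2)

/-- Membership in the subgroup `G(ℓ,r,n)`: `r·(η(1) + ⋯ + η(n)) = 0` in `ℤ/ℓℤ`. -/
def memG (r : ℕ) {ℓ n : ℕ} (g : GW ℓ n) : Prop :=
  (r : ZMod ℓ) * ∑ i, g.1 i = 0

theorem gmul_assoc {ℓ n : ℕ} (a b c : GW ℓ n) :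
    gmul (gmul a b) c = gmul a (gmul b c) := by
  simp only [gmul, Prod.mk.injEq]
  constructor
  · funext i
    simp [Equiv.Perm.mul_apply, add_assoc]
  · exact mul_assoc _ _ _

/-- If the permutation part of `g ∈ G(ℓ,r,n)` has a fixed point, then every element of
`G(ℓ,r,n)` conjugate to `g` inside `G(ℓ,1,n)` is conjugate to `g` inside `G(ℓ,r,n)`.
(Conjugacy `k g k⁻¹ = h` is expressed equivalently as `k g = h k`.) -/
theorem class_no_splitting (ℓ n r : ℕ) (hℓ : 0 < ℓ) (hn : 0 < n) (hr : 0 < r)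
    (hdvd : r ∣ ℓ) (g : GW ℓ n) (hg : memG r g) (hfix : ∃ i, g.2 i = i)
    (h : GW ℓ n) (hh : memG r h)
    (hconj : ∃ k : GW ℓ n, gmul k g = gmul h k) :
    ∃ k : GW ℓ n, memG r k ∧ gmul k g = gmul h k := by
  obtain ⟨i₀, hi₀⟩ := hfix
  obtain ⟨k, hk⟩ := hconj
  set c : ZMod ℓ := -∑ i, k.1 i with hc
  set z : GW ℓ n := (fun j => if j = i₀ then c else 0, 1) with hz
  have hinv : g.2⁻¹ i₀ = i₀ := by
    conv_lhs => rw [← hi₀]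
    exact g.2.symm_apply_apply i₀
  -- z commutes with g
  have hcomm : gmul z g = gmul g z := by
    simp only [gmul, hz, Prod.mk.injEq]
    refine ⟨?_, by simp [mul_comm]⟩
    funext j
    have key : ((if g.2.symm j = i₀ then c else 0) : ZMod ℓ) = if j = i₀ then c else 0 := by
      congr 1
      simp only [eq_iff_iff]
      constructor
      · intro hji
        have h2 := congrArg g.2 hji
        rwa [Equiv.apply_symm_apply, hi₀] at h2
      · intro hji; rw [hji]; exact hinv
    simp only [Pi.add_apply, Equiv.Perm.inv_def]
    rw [key, show ((1 : Equiv.Perm (Fin n)).symm j) = j from rfl]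
    ring
  refine ⟨gmul k z, ?_, ?_⟩
  · -- membership
    simp only [memG, gmul, hz, Pi.add_apply]
    rw [Finset.sum_add_distrib]
    have hperm : ∑ i, ((fun j => if j = i₀ then c else 0) (k.2⁻¹ i))
        = ∑ i, (if i = i₀ then c else 0) :=
      Equiv.sum_comp k.2⁻¹ (fun i => if i = i₀ then c else 0)
    rw [hperm, Finset.sum_ite_eq' Finset.univ i₀ (fun _ => c)]
    simp [hc]
  · calc gmul (gmul k z) g = gmul k (gmul z g) := gmul_assoc _ _ _
      _ = gmul k (gmul g z) := by rw [hcomm]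
      _ = gmul (gmul k g) z := (gmul_assoc _ _ _).symm
      _ = gmul (gmul h k) z := by rw [hk]
      _ = gmul h (gmul k z) := gmul_assoc _ _ _
end

section
/- A partition λ is singular (i.e., for every i ∈ ℤ/eℤ its reduced i-signature contains no '−', equivalently all crystal operators ẽ_i of the level-one ŝl_e Fock-space crystal annihilate λ) if and only if λ is divisible by e, i.e., there is a partition μ with λ_k = e·μ_k for every k ≥ 1. -/
/-- A partition: a weakly decreasing, eventually zero sequence of nonnegative integers.
`part k` is the `(k+1)`-st part, i.e. the length of row `k+1` of the Young diagram. -/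
structure Partn where
  part : ℕ → ℕ
  antitone : ∀ k, part (k + 1) ≤ part k
  finite : ∃ N, ∀ k, N ≤ k → part k = 0

/-- Row `k` (0-indexed) has an addable box at its end. -/
def AddableRow (p : Partn) (k : ℕ) : Prop :=
  k = 0 ∨ p.part k < p.part (k - 1)

/-- Row `k` (0-indexed) has a removable box at its end. -/
def RemovableRow (p : Partn) (k : ℕ) : Prop :=
  p.part (k + 1) < p.part k

/-- Content `x - y` of the addable box `(p.part k + 1, k + 1)` in row `k` (0-indexed). -/
def contA (p : Partn) (k : ℕ) : ℤ := (p.part k : ℤ) - k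

/-- Content `x - y` of the removable box `(p.part k, k + 1)` in row `k` (0-indexed). -/
def contR (p : Partn) (k : ℕ) : ℤ := (p.part k : ℤ) - (k + 1)

open Classical in
/-- The letter of the signature of `p` at content `c`: `some true` (i.e. '+') if `p` has an
addable box of content `c`, `some false` (i.e. '−') if `p` has a removable box of content
`c`, and `none` otherwise. -/
noncomputable def letter (p : Partn) (c : ℤ) : Option Bool :=
  if ∃ k, AddableRow p k ∧ contA p k = c then some true
  else if ∃ k, RemovableRow p k ∧ contR p k = c then some false
  else none

/-- Repeatedly delete consecutive subwords `−+` (i.e. `false, true`) until none remain. -/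
def reduce : List Bool → List Bool
  | [] => []
  | a :: w =>
    match a, reduce w with
    | false, true :: tail => tail
    | _, r => a :: r

open Classical in
/-- The `i`-signature of `p`: the letters at all boxes of residue `i` mod `e`, listed in
order of strictly decreasing content.  (All addable and removable boxes of `p` have
contents in the interval from `p.part 0` down to `-(N + 1)`, where `N` is a bound beyond
which all parts vanish.) -/
noncomputable def word (e : ℕ) (p : Partn) (i : ZMod e) : List Bool :=
  ((List.range (p.part 0 + Classical.choose p.finite + 2)).map
      (fun t => (p.part 0 : ℤ) - t)).filterMap
    (fun (c : ℤ) => if ((c : ZMod e) = i) then letter p c else none)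

/-!
Encode `p` by its abacus: position `c ∈ ℤ` carries a bead iff `c = contR p k` for some row `k`.
A box of content `c` is addable iff `c - 1` is a bead and `c` is not, and removable iff `c` is a
bead and `c - 1` is not. Hence the letters of the `i`-signature at contents `≤ c` telescope to
`D c - D (c - 1)`, where `D c` counts the gaps at `c, c - e, c - 2e, …`, and `p` is singular iff
`D` is monotone (up to `p.part 0`). The sum of `D` over the `e` positions ending at the bead
`contR p k` counts all gaps below that bead, which is `p.part k`. If `D` is monotone, the `e`
summands are equal, so `e ∣ p.part k`. Conversely, at the lowest descent `c` of `D` the position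
`c` is a bead and the summands take both values `v` and `v + 1`, so their sum lies strictly
between `e * v` and `e * (v + 1)`.
-/

theorem monotoneOn_Iic_iff_sub_one_le {α : Type*} [Preorder α] {f : ℤ → α} {X : ℤ} :
    MonotoneOn f (Set.Iic X) ↔ ∀ c ≤ X, f (c - 1) ≤ f c := by
  refine ⟨fun h c hc => h (show c - 1 ≤ X by omega) hc (by omega), fun h => ?_⟩
  refine monotoneOn_of_le_succ Set.ordConnected_Iic fun a _ _ ha => ?_
  rw [Order.succ_eq_add_one] at ha ⊢
  simpa using h (a + 1) ha

theorem List.suffix_range_iff {l : List ℕ} {n : ℕ} :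
    l <:+ List.range n ↔ ∃ d, l = List.range' d (n - d) := by
  constructor
  · intro h
    refine ⟨n - l.length, ?_⟩
    calc l = (List.range n).drop (n - l.length) := by simpa using List.suffix_iff_eq_drop.mp h
      _ = _ := by rw [List.range_eq_range', List.drop_range', zero_add, mul_one]
  · rintro ⟨d, rfl⟩
    simpa [List.range_eq_range', List.drop_range'] using List.drop_suffix d (List.range n)

theorem exists_intCast_eq_of_sub_lt_of_le {e : ℕ} [NeZero e] (i : ZMod e) (a : ℤ) :
    ∃ c : ℤ, (c : ZMod e) = i ∧ a - e < c ∧ c ≤ a := by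
  have he : (0 : ℤ) < e := by exact_mod_cast Nat.pos_of_neZero e
  obtain ⟨v, rfl⟩ : ∃ v : ℕ, (v : ZMod e) = i := ⟨i.val, ZMod.natCast_zmod_val i⟩
  refine ⟨a - (a - v) % e, ?_, ?_, ?_⟩
  · rw [← Int.cast_natCast (R := ZMod e) v, ZMod.intCast_eq_intCast_iff_dvd_sub]
    exact ⟨-((a - v) / e), by linarith [Int.emod_add_ediv_mul (a - v) e]⟩
  · linarith [Int.emod_lt_of_pos (a - v) he]
  · linarith [Int.emod_nonneg (a - v) he.ne']

theorem not_natCast_dvd_sum_range {f : ℕ → ℤ} {n a b : ℕ} {v : ℤ}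
    (hf : ∀ j < n, v ≤ f j ∧ f j ≤ v + 1) (ha : a < n) (hb : b < n) (hfa : f a = v)
    (hfb : f b = v + 1) : ¬ (n : ℤ) ∣ ∑ j ∈ Finset.range n, f j := by
  rintro ⟨w, hw⟩
  have hconst : ∀ u : ℤ, ∑ _j ∈ Finset.range n, u = n * u := fun u => by
    rw [Finset.sum_const, Finset.card_range, nsmul_eq_mul]
  have hlo : (n : ℤ) * v < n * w := by
    rw [← hw, ← hconst]
    exact Finset.sum_lt_sum (fun j hj => (hf j (Finset.mem_range.mp hj)).1)
      ⟨b, Finset.mem_range.mpr hb, by omega⟩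
  have hhi : (n : ℤ) * w < n * (v + 1) := by
    rw [← hw, ← hconst]
    exact Finset.sum_lt_sum (fun j hj => (hf j (Finset.mem_range.mp hj)).2)
      ⟨a, Finset.mem_range.mpr ha, by omega⟩
  have := lt_of_mul_lt_mul_left hlo (by positivity)
  have := lt_of_mul_lt_mul_left hhi (by positivity)
  omega

def reduceCounts : List Bool → ℕ × ℕ
  | [] => (0, 0)
  | b :: w =>
    let r := reduceCounts w
    if b then (r.1 + 1, r.2)
    else if r.1 = 0 then (0, r.2 + 1) else (r.1 - 1, r.2)

theorem reduce_eq_replicate (w : List Bool) :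
    reduce w =
      List.replicate (reduceCounts w).1 true ++ List.replicate (reduceCounts w).2 false := by
  induction w with
  | nil => rfl
  | cons a w ih =>
    have hcons : reduce (a :: w) = match a, reduce w with
      | false, true :: tail => tail
      | _, r => a :: r := rfl
    rw [hcons, ih]
    simp only [reduceCounts]
    generalize reduceCounts w = r
    rcases a with _ | _ <;> rcases r with ⟨_ | m, _ | n⟩ <;> simp [List.replicate_succ]

theorem reduceCounts_fst_sub_snd (w : List Bool) :
    ((reduceCounts w).1 : ℤ) - (reduceCounts w).2 = (w.count true : ℤ) - w.count false := by
  induction w with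
  | nil => simp [reduceCounts]
  | cons a w ih =>
    rcases a with _ | _ <;> by_cases h : (reduceCounts w).1 = 0 <;>
      simp [reduceCounts, h] at ih ⊢ <;> omega

theorem reduceCounts_snd_eq_zero_iff (w : List Bool) :
    (reduceCounts w).2 = 0 ↔ ∀ s, s <:+ w → s.count false ≤ s.count true := by
  induction w with
  | nil => simp [reduceCounts]
  | cons a w ih =>
    have hforall : (∀ s, s <:+ a :: w → s.count false ≤ s.count true) ↔
        (a :: w).count false ≤ (a :: w).count true ∧
          ∀ s, s <:+ w → s.count false ≤ s.count true := by
      simp only [List.suffix_cons_iff, or_imp, forall_and, forall_eq]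
    rw [hforall, ← ih]
    have := reduceCounts_fst_sub_snd w
    rcases a with _ | _ <;> by_cases h : (reduceCounts w).1 = 0 <;>
      simp [reduceCounts, h] <;> omega

theorem false_notMem_reduce_iff (w : List Bool) :
    false ∉ reduce w ↔ ∀ s, s <:+ w → s.count false ≤ s.count true := by
  rw [← reduceCounts_snd_eq_zero_iff, reduce_eq_replicate]
  simp [List.mem_replicate]

namespace Partn

noncomputable def bound (p : Partn) : ℕ := p.finite.choose

theorem part_eq_zero_of_bound_le (p : Partn) {k : ℕ} (h : p.bound ≤ k) : p.part k = 0 :=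
  p.finite.choose_spec k h

end Partn

theorem contR_strictAnti (p : Partn) : StrictAnti (contR p) :=
  strictAnti_nat_of_succ_lt fun k => by
    have := p.antitone k
    simp only [contR]
    push_cast
    omega

theorem contR_lt_part_zero (p : Partn) (k : ℕ) : contR p k < p.part 0 := by
  have := (contR_strictAnti p).antitone (Nat.zero_le k)
  simp only [contR] at this ⊢
  omega

theorem contR_of_bound_le (p : Partn) {k : ℕ} (h : p.bound ≤ k) : contR p k = -(k + 1) := by
  simp [contR, p.part_eq_zero_of_bound_le h]

/-- The beads of the abacus (β-set) of `p`, one for each row, empty rows included. -/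
def beads (p : Partn) : Set ℤ := Set.range (contR p)

theorem mem_beads_of_le (p : Partn) {c : ℤ} (h : c ≤ -p.bound - 1) : c ∈ beads p :=
  ⟨(-c - 1).toNat, by rw [contR_of_bound_le p (by omega)]; omega⟩

noncomputable def gap (p : Partn) : ℤ → ℤ := (beads p)ᶜ.indicator 1

theorem gap_of_mem {p : Partn} {c : ℤ} (h : c ∈ beads p) : gap p c = 0 :=
  Set.indicator_of_notMem (Set.notMem_compl_iff.mpr h) _

theorem gap_of_notMem {p : Partn} {c : ℤ} (h : c ∉ beads p) : gap p c = 1 :=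
  Set.indicator_of_mem (Set.mem_compl h) _

theorem gap_nonneg (p : Partn) (c : ℤ) : 0 ≤ gap p c := by
  by_cases h : c ∈ beads p <;> simp [gap_of_mem, gap_of_notMem, h]

theorem gap_le_one (p : Partn) (c : ℤ) : gap p c ≤ 1 := by
  by_cases h : c ∈ beads p <;> simp [gap_of_mem, gap_of_notMem, h]

/-- The number of gaps at the positions `c, c - e, c - 2e, …`; the range reaches the region
below `-p.bound`, where there are none. -/
noncomputable def runnerGaps (e : ℕ) (p : Partn) (c : ℤ) : ℤ :=
  ∑ t ∈ Finset.range (c + p.bound + 2).toNat, gap p (c - t * e)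

theorem runnerGaps_eq_sum_range {e : ℕ} (he : 1 ≤ e) (p : Partn) {c : ℤ} {T : ℕ}
    (hT : (c + p.bound + 2).toNat ≤ T) :
    runnerGaps e p c = ∑ t ∈ Finset.range T, gap p (c - t * e) := by
  refine Finset.sum_subset (Finset.range_subset_range.mpr hT) fun t _ ht => ?_
  have ht : c + p.bound + 2 ≤ t := by simpa using ht
  have : (t : ℤ) ≤ t * e := le_mul_of_one_le_right (by positivity) (by exact_mod_cast he)
  exact gap_of_mem (mem_beads_of_le p (by omega))

theorem runnerGaps_nonneg (e : ℕ) (p : Partn) (c : ℤ) : 0 ≤ runnerGaps e p c :=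
  Finset.sum_nonneg fun _ _ => gap_nonneg p _

theorem runnerGaps_of_le (e : ℕ) (p : Partn) {c : ℤ} (h : c ≤ -p.bound - 1) :
    runnerGaps e p c = 0 :=
  Finset.sum_eq_zero fun t _ => gap_of_mem (mem_beads_of_le p (by
    have : (0 : ℤ) ≤ t * e := by positivity
    omega))

theorem runnerGaps_eq_gap_add {e : ℕ} (he : 1 ≤ e) (p : Partn) (c : ℤ) :
    runnerGaps e p c = gap p c + runnerGaps e p (c - e) := by
  set T := (c + p.bound + 2).toNat
  rw [runnerGaps_eq_sum_range he p (Nat.le_succ T), Finset.sum_range_succ',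
    runnerGaps_eq_sum_range he p (T := T) (by omega)]
  simp only [Nat.cast_add, Nat.cast_one, Nat.cast_zero, zero_mul, sub_zero]
  rw [add_comm]
  congr 1
  exact Finset.sum_congr rfl fun t _ => by ring_nf

theorem exists_contR_le (p : Partn) (c : ℤ) : ∃ k, contR p k ≤ c :=
  ⟨p.bound + (-c).toNat, by rw [contR_of_bound_le p (by omega)]; omega⟩

open Classical in
noncomputable def beadsAbove (p : Partn) (c : ℤ) : ℕ := Nat.find (exists_contR_le p c)

theorem beadsAbove_eq_iff (p : Partn) (c : ℤ) (k : ℕ) :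
    beadsAbove p c = k ↔ contR p k ≤ c ∧ ∀ j < k, c < contR p j := by
  classical
  simp only [beadsAbove, Nat.find_eq_iff, not_le]

theorem beadsAbove_contR (p : Partn) (k : ℕ) : beadsAbove p (contR p k) = k :=
  (beadsAbove_eq_iff p _ k).mpr ⟨le_rfl, fun _ hj => contR_strictAnti p hj⟩

theorem beadsAbove_sub_one_of_mem (p : Partn) {c : ℤ} (h : c ∈ beads p) :
    beadsAbove p (c - 1) = beadsAbove p c + 1 := by
  obtain ⟨k, rfl⟩ := h
  rw [beadsAbove_contR, beadsAbove_eq_iff]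
  have := contR_strictAnti p k.lt_add_one
  refine ⟨by omega, fun j hj => ?_⟩
  have := (contR_strictAnti p).antitone (Nat.le_of_lt_succ hj)
  omega

theorem beadsAbove_sub_one_of_notMem (p : Partn) {c : ℤ} (h : c ∉ beads p) :
    beadsAbove p (c - 1) = beadsAbove p c := by
  obtain ⟨hle, hlt⟩ := (beadsAbove_eq_iff p c _).mp rfl
  have hne : contR p (beadsAbove p c) ≠ c := fun hc => h ⟨_, hc⟩
  exact (beadsAbove_eq_iff p _ _).mpr ⟨by omega, fun j hj => by have := hlt j hj; omega⟩

/-- The number of all gaps at or below `c`, split along the runners of `c, …, c - e + 1`. -/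
noncomputable def windowGaps (e : ℕ) (p : Partn) (c : ℤ) : ℤ :=
  ∑ j ∈ Finset.range e, runnerGaps e p (c - j)

theorem windowGaps_sub_one {e : ℕ} (he : 1 ≤ e) (p : Partn) (c : ℤ) :
    windowGaps e p (c - 1) = windowGaps e p c - gap p c := by
  have hsucc' : ∑ j ∈ Finset.range (e + 1), runnerGaps e p (c - j) =
      windowGaps e p (c - 1) + runnerGaps e p c := by
    rw [Finset.sum_range_succ', windowGaps]
    simp only [Nat.cast_add, Nat.cast_one, Nat.cast_zero, sub_zero, sub_add_eq_sub_sub_swap]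
  have hsucc : ∑ j ∈ Finset.range (e + 1), runnerGaps e p (c - j) =
      windowGaps e p c + runnerGaps e p (c - e) :=
    Finset.sum_range_succ _ _
  have := runnerGaps_eq_gap_add he p c
  omega

theorem windowGaps_eq {e : ℕ} (he : 1 ≤ e) (p : Partn) (c : ℤ) :
    windowGaps e p c = c + beadsAbove p c + 1 := by
  set f : ℤ → ℤ := fun c => windowGaps e p c - (c + beadsAbove p c + 1)
  have hstep : ∀ c, f (c - 1) = f c := fun c => by
    have := windowGaps_sub_one he p c
    by_cases h : c ∈ beads p
    · have := beadsAbove_sub_one_of_mem p h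
      have := gap_of_mem h
      simp only [f]
      omega
    · have := beadsAbove_sub_one_of_notMem p h
      have := gap_of_notMem h
      simp only [f]
      omega
  have hconst : ∀ c, f c = f 0 := fun c => by
    induction c using Int.induction_on with
    | zero => rfl
    | succ n ih => rw [← hstep (n + 1), add_sub_cancel_right, ih]
    | pred n ih => rw [hstep, ih]
  have hbase : f (contR p p.bound) = 0 := by
    have hrow : contR p p.bound = -p.bound - 1 := by rw [contR_of_bound_le p le_rfl]; ring
    have hzero : windowGaps e p (contR p p.bound) = 0 :=
      Finset.sum_eq_zero fun j _ => runnerGaps_of_le e p (by omega)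
    show windowGaps e p _ - (_ + (beadsAbove p _ : ℤ) + 1) = 0
    rw [hzero, beadsAbove_contR, hrow]
    ring
  have : f c = 0 := by rw [hconst, ← hconst (contR p p.bound), hbase]
  simp only [f] at this
  omega

theorem windowGaps_contR {e : ℕ} (he : 1 ≤ e) (p : Partn) (k : ℕ) :
    windowGaps e p (contR p k) = p.part k := by
  rw [windowGaps_eq he, beadsAbove_contR, contR]
  ring

theorem contA_eq_contR_add_one (p : Partn) (k : ℕ) : contA p k = contR p k + 1 := by
  simp only [contA, contR]
  ring

theorem mem_beads_and_sub_one_mem_iff (p : Partn) (c : ℤ) :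
    c ∈ beads p ∧ c - 1 ∈ beads p ↔ ∃ j, contR p j = c ∧ p.part (j + 1) = p.part j := by
  constructor
  · rintro ⟨⟨j, rfl⟩, ⟨k, hk⟩⟩
    have hjk : j < k := (contR_strictAnti p).lt_iff_gt.mp (by omega)
    have h1 := (contR_strictAnti p).antitone (show j + 1 ≤ k from hjk)
    have h2 := contR_strictAnti p j.lt_add_one
    refine ⟨j, rfl, ?_⟩
    simp only [contR] at hk h1 h2
    push_cast at h1 h2
    omega
  · rintro ⟨j, rfl, h⟩
    refine ⟨⟨j, rfl⟩, ⟨j + 1, ?_⟩⟩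
    simp only [contR, h]
    push_cast
    ring

theorem exists_removable_iff (p : Partn) (c : ℤ) :
    (∃ k, RemovableRow p k ∧ contR p k = c) ↔ c ∈ beads p ∧ c - 1 ∉ beads p := by
  constructor
  · rintro ⟨k, hk, rfl⟩
    refine ⟨⟨k, rfl⟩, fun h => ?_⟩
    obtain ⟨j, hj, heq⟩ := (mem_beads_and_sub_one_mem_iff p _).mp ⟨⟨k, rfl⟩, h⟩
    obtain rfl := (contR_strictAnti p).injective hj
    exact (ne_of_lt hk) heq
  · rintro ⟨⟨k, rfl⟩, h⟩
    refine ⟨k, lt_of_le_of_ne (p.antitone k) fun heq => h ?_, rfl⟩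
    exact ((mem_beads_and_sub_one_mem_iff p _).mpr ⟨k, rfl, heq⟩).2

theorem exists_addable_iff (p : Partn) (c : ℤ) :
    (∃ k, AddableRow p k ∧ contA p k = c) ↔ c - 1 ∈ beads p ∧ c ∉ beads p := by
  simp only [contA_eq_contR_add_one]
  constructor
  · rintro ⟨k, hk, rfl⟩
    refine ⟨⟨k, by ring⟩, fun h => ?_⟩
    obtain ⟨j, hj, heq⟩ := (mem_beads_and_sub_one_mem_iff p _).mp ⟨h, ⟨k, by ring⟩⟩
    have hj1 : contR p (j + 1) = contR p k := by simp only [contR] at hj ⊢; push_cast; omega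
    obtain rfl := (contR_strictAnti p).injective hj1
    rcases hk with h0 | hlt
    · omega
    · exact (ne_of_lt hlt) heq
  · rintro ⟨⟨k, hk⟩, h⟩
    refine ⟨k, ?_, by omega⟩
    rcases k with _ | m
    · exact Or.inl rfl
    refine Or.inr (lt_of_le_of_ne (p.antitone m) fun heq => h ?_)
    have hm : contR p m = c := by simp only [contR, heq] at hk ⊢; push_cast at hk; omega
    exact ((mem_beads_and_sub_one_mem_iff p c).mpr ⟨m, hm, heq⟩).1

def sgn : Option Bool → ℤ
  | some true => 1
  | some false => -1
  | none => 0

theorem sgn_letter (p : Partn) (c : ℤ) : sgn (letter p c) = gap p c - gap p (c - 1) := by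
  by_cases h1 : c ∈ beads p <;> by_cases h2 : c - 1 ∈ beads p <;>
    simp [letter, exists_addable_iff, exists_removable_iff, gap_of_mem, gap_of_notMem, h1, h2, sgn]

open Classical in
noncomputable def residueLetter (e : ℕ) (p : Partn) (i : ZMod e) (c : ℤ) : Option Bool :=
  if (c : ZMod e) = i then letter p c else none

-- In `word`, `List.range _` is coerced to `List ℤ` through the list monad.
theorem word_eq_filterMap (e : ℕ) (p : Partn) (i : ZMod e) :
    word e p i = ((List.range (p.part 0 + p.bound + 2)).map
      (fun t : ℕ => (p.part 0 : ℤ) - t)).filterMap (residueLetter e p i) := by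
  have hcast : ∀ n : ℕ,
      (do let a ← List.range n; pure (a : ℤ)) = (List.range n).map (↑) :=
    fun _ => List.flatMap_pure_eq_map _ _
  simp only [word, residueLetter, Partn.bound, hcast, List.map_map]
  rfl

theorem count_true_sub_count_false_filterMap {α : Type*} (F : α → Option Bool) (l : List α) :
    ((l.filterMap F).count true : ℤ) - (l.filterMap F).count false =
      (l.map fun a => sgn (F a)).sum := by
  induction l with
  | nil => simp
  | cons a l ih =>
    rw [List.map_cons, List.sum_cons, ← ih, List.filterMap_cons]
    rcases F a with _ | _ | _ <;> simp [sgn] <;> omega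

/-- By `sgn_letter`, the letters of the `i`-signature at contents `≤ p.part 0 - d` telescope
along the runner of `c`, the position of residue `i` just below `p.part 0 - d`. -/
theorem sum_sgn_residueLetter {e : ℕ} (he : 1 ≤ e) (p : Partn) (i : ZMod e) (n d : ℕ)
    (c : ℤ) (hci : (c : ZMod e) = i) (hlo : (p.part 0 : ℤ) - d - e < c)
    (hhi : c ≤ (p.part 0 : ℤ) - d) (hn : (p.part 0 : ℤ) - (d + n) ≤ -p.bound - 1) :
    ((List.range' d n).map fun t : ℕ => sgn (residueLetter e p i ((p.part 0 : ℤ) - t))).sum =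
      runnerGaps e p c - runnerGaps e p (c - 1) := by
  induction n generalizing d c with
  | zero =>
    rw [runnerGaps_of_le e p (by omega), runnerGaps_of_le e p (by omega)]
    simp
  | succ n ih =>
    rw [List.range'_succ, List.map_cons, List.sum_cons]
    by_cases hc : c = (p.part 0 : ℤ) - d
    · have hletter : residueLetter e p i ((p.part 0 : ℤ) - d) = letter p c := by
        simp [residueLetter, ← hc, hci]
      have hce : ((c - e : ℤ) : ZMod e) = i := by simp [hci]
      rw [hletter, sgn_letter, ih (d + 1) (c - e) hce (by push_cast; omega) (by push_cast; omega)
        (by push_cast; omega), runnerGaps_eq_gap_add he p c, runnerGaps_eq_gap_add he p (c - 1),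
        sub_right_comm c 1]
      ring
    · have hne : ¬ (((p.part 0 : ℤ) - d : ℤ) : ZMod e) = i := fun h => by
        rw [← hci] at h
        have := Int.le_of_dvd (by omega) ((ZMod.intCast_eq_intCast_iff_dvd_sub _ _ _).mp h.symm)
        omega
      have hletter : residueLetter e p i ((p.part 0 : ℤ) - d) = none := if_neg hne
      rw [hletter,
        ih (d + 1) c hci (by push_cast; omega) (by push_cast; omega) (by push_cast; omega)]
      simp [sgn]

theorem forall_suffix_word_iff (e : ℕ) (p : Partn) (i : ZMod e) :
    (∀ s, s <:+ word e p i → s.count false ≤ s.count true) ↔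
      ∀ d, 0 ≤ ((List.range' d (p.part 0 + p.bound + 2 - d)).map
        fun t : ℕ => sgn (residueLetter e p i ((p.part 0 : ℤ) - t))).sum := by
  have hsum (l : List ℕ) := count_true_sub_count_false_filterMap (residueLetter e p i)
    (l.map fun t : ℕ => (p.part 0 : ℤ) - t)
  simp only [List.map_map, Function.comp_def] at hsum
  simp only [word_eq_filterMap, List.suffix_filterMap_iff, List.suffix_map_iff,
    List.suffix_range_iff]
  constructor
  · intro h d
    have := h _ ⟨_, ⟨_, ⟨d, rfl⟩, rfl⟩, rfl⟩
    have := hsum (List.range' d (p.part 0 + p.bound + 2 - d))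
    omega
  · rintro h s ⟨_, ⟨_, ⟨d, rfl⟩, rfl⟩, rfl⟩
    have := h d
    have := hsum (List.range' d (p.part 0 + p.bound + 2 - d))
    omega

theorem singular_iff_monotoneOn {e : ℕ} (he : 1 ≤ e) (p : Partn) :
    (∀ i : ZMod e, false ∉ reduce (word e p i)) ↔
      MonotoneOn (runnerGaps e p) (Set.Iic (p.part 0 : ℤ)) := by
  have : NeZero e := ⟨by omega⟩
  simp only [false_notMem_reduce_iff, forall_suffix_word_iff, monotoneOn_Iic_iff_sub_one_le]
  constructor
  · intro h c hc
    have hsum := h c ((p.part 0 : ℤ) - c).toNat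
    rw [sum_sgn_residueLetter he p c _ _ c rfl (by omega) (by omega) (by omega)] at hsum
    omega
  · intro h i d
    obtain ⟨c, hci, hlo, hhi⟩ := exists_intCast_eq_of_sub_lt_of_le i ((p.part 0 : ℤ) - d)
    rw [sum_sgn_residueLetter he p i _ d c hci hlo hhi (by omega)]
    have := h c (by omega)
    omega

theorem dvd_part_of_monotoneOn {e : ℕ} (he : 1 ≤ e) (p : Partn)
    (hmono : MonotoneOn (runnerGaps e p) (Set.Iic (p.part 0 : ℤ))) (k : ℕ) :
    e ∣ p.part k := by
  set c := contR p k
  have hc : c ≤ p.part 0 := (contR_lt_part_zero p k).le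
  have hbead : runnerGaps e p c = runnerGaps e p (c - e) := by
    rw [runnerGaps_eq_gap_add he, gap_of_mem ⟨k, rfl⟩, zero_add]
  have hwindow : ∀ j ∈ Finset.range e, runnerGaps e p (c - j) = runnerGaps e p (c - e) :=
    fun j hj => by
      have hj : (j : ℤ) < e := by exact_mod_cast Finset.mem_range.mp hj
      refine le_antisymm ?_ (hmono (Set.mem_Iic.mpr (by omega)) (Set.mem_Iic.mpr (by omega))
        (by omega))
      exact hbead ▸ hmono (Set.mem_Iic.mpr (by omega)) (Set.mem_Iic.mpr hc) (by omega)
  have hpart : (p.part k : ℤ) = e * runnerGaps e p (c - e) := by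
    rw [← windowGaps_contR he p k, windowGaps, Finset.sum_congr rfl hwindow, Finset.sum_const,
      Finset.card_range, nsmul_eq_mul]
  exact Int.natCast_dvd_natCast.mp ⟨_, hpart⟩

theorem exists_descent_monotoneOn_below (e : ℕ) (p : Partn) (h : ¬ Monotone (runnerGaps e p)) :
    ∃ c, runnerGaps e p c < runnerGaps e p (c - 1) ∧
      MonotoneOn (runnerGaps e p) (Set.Iic (c - 1)) := by
  obtain ⟨c, hviol, hleast⟩ : ∃ c, runnerGaps e p c < runnerGaps e p (c - 1) ∧
      ∀ c', runnerGaps e p c' < runnerGaps e p (c' - 1) → c ≤ c' := by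
    refine Int.exists_least_of_bdd ⟨-p.bound, fun c hc => ?_⟩ ?_
    · by_contra hlt
      rw [runnerGaps_of_le e p (by omega : c ≤ -p.bound - 1),
        runnerGaps_of_le e p (by omega : c - 1 ≤ -p.bound - 1)] at hc
      exact lt_irrefl _ hc
    · by_contra hnone
      simp only [not_exists, not_lt] at hnone
      exact h (monotone_int_of_le_succ fun n => by simpa using hnone (n + 1))
  refine ⟨c, hviol, monotoneOn_Iic_iff_sub_one_le.mpr fun c' hc' => not_lt.mp fun h => ?_⟩
  have := hleast c' h
  omega

theorem runnerGaps_of_descent {e : ℕ} (he : 1 ≤ e) (p : Partn) {c : ℤ}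
    (hviol : runnerGaps e p c < runnerGaps e p (c - 1))
    (hbelow : MonotoneOn (runnerGaps e p) (Set.Iic (c - 1))) :
    c ∈ beads p ∧ runnerGaps e p c = runnerGaps e p (c - e) ∧
      runnerGaps e p (c - 1) = runnerGaps e p (c - e) + 1 := by
  have hrec := runnerGaps_eq_gap_add he p c
  have hrec₁ := runnerGaps_eq_gap_add he p (c - 1)
  have hshift : runnerGaps e p (c - 1 - e) ≤ runnerGaps e p (c - e) :=
    hbelow (Set.mem_Iic.mpr (by omega)) (Set.mem_Iic.mpr (by omega)) (by omega)
  have := gap_nonneg p c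
  have := gap_le_one p (c - 1)
  have hgap : gap p c = 0 := by omega
  exact ⟨by_contra fun h => one_ne_zero ((gap_of_notMem h).symm.trans hgap), by omega,
    by omega⟩

theorem monotone_runnerGaps_of_dvd {e : ℕ} (he : 1 ≤ e) (p : Partn)
    (hdvd : ∀ k, e ∣ p.part k) : Monotone (runnerGaps e p) := by
  by_contra hmono
  obtain ⟨c, hviol, hbelow⟩ := exists_descent_monotoneOn_below e p hmono
  obtain ⟨⟨k, rfl⟩, hc, hc₁⟩ := runnerGaps_of_descent he p hviol hbelow
  set v := runnerGaps e p (contR p k - e)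
  have he₂ : 1 < e := by
    by_contra h
    obtain rfl : e = 1 := by omega
    simp [v] at hc₁
  -- The `e` summands of `windowGaps` at the bead `contR p k` take both values `v` and `v + 1`.
  have hwindow : ∀ j < e, v ≤ runnerGaps e p (contR p k - j) ∧
      runnerGaps e p (contR p k - j) ≤ v + 1 := fun j hj => by
    rcases j with _ | j
    · simp [hc]
    · have hj : (j : ℤ) + 1 < e := by exact_mod_cast hj
      rw [← hc₁]
      exact ⟨hbelow (Set.mem_Iic.mpr (by omega)) (Set.mem_Iic.mpr (by push_cast; omega))
          (by push_cast; omega),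
        hbelow (Set.mem_Iic.mpr (by push_cast; omega)) (Set.mem_Iic.mpr le_rfl)
          (by push_cast; omega)⟩
  refine not_natCast_dvd_sum_range (f := fun j => runnerGaps e p (contR p k - j)) (a := 0)
    (b := 1) hwindow (by omega) he₂ (by simpa using hc) (by simpa using hc₁) ?_
  rw [← windowGaps, windowGaps_contR he p k]
  exact Int.natCast_dvd_natCast.mpr (hdvd k)

theorem Partn.exists_eq_mul_of_dvd (p : Partn) {e : ℕ} (h : ∀ k, e ∣ p.part k) :
    ∃ q : Partn, ∀ k, p.part k = e * q.part k :=
  ⟨⟨fun k => p.part k / e, fun k => Nat.div_le_div_right (p.antitone k),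
      p.bound, fun k hk => by simp [p.part_eq_zero_of_bound_le hk]⟩,
    fun k => (Nat.mul_div_cancel' (h k)).symm⟩

/-- A partition is singular for the level-one `ŝl_e` Fock-space crystal (i.e. all its
reduced `i`-signatures contain no '−', equivalently all crystal operators `ẽ_i`
annihilate it) if and only if it is divisible by `e`. -/
theorem singular_iff_divisible_by_e (e : ℕ) (he : 1 ≤ e) (p : Partn) :
    (∀ i : ZMod e, false ∉ reduce (word e p i)) ↔
      ∃ q : Partn, ∀ k, p.part k = e * q.part k := by
  rw [singular_iff_monotoneOn he p]
  constructor
  · exact fun hmono => p.exists_eq_mul_of_dvd (dvd_part_of_monotoneOn he p hmono)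
  · rintro ⟨q, hq⟩
    exact (monotone_runnerGaps_of_dvd he p fun k => ⟨q.part k, hq k⟩).monotoneOn _
end

section
/- Let λ be a partition, e ≥ 1 an integer, and let λ = eλ' + λ'' (part-wise) be the unique decomposition with λ'' e-co-restricted. Then for any partitions μ, ν with λ_k = e·μ_k + ν_k for all k ≥ 1 one has μ_k ≤ λ'_k and ν_k ≥ λ''_k for all k; in particular |λ'| is the maximal possible value of |μ| over all such decompositions. -/
/-- The size `|λ| = Σ_k λ_k` of a partition (all parts beyond the chosen bound vanish). -/
noncomputable def Partn.size (p : Partn) : ℕ :=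
  ∑ k ∈ Finset.range (Classical.choose p.finite), p.part k

lemma Partn.size_eq (p : Partn) (M : ℕ) (hM : Classical.choose p.finite ≤ M) :
    p.size = ∑ k ∈ Finset.range M, p.part k := by
  refine Finset.sum_subset (Finset.range_subset_range.2 hM) ?_
  intro x _ hx
  exact Classical.choose_spec p.finite x (by simpa using Nat.le_of_not_lt (by simpa using hx))

/-- If `λ = eλ' + λ''` is the decomposition with `λ''` e-co-restricted, then for any
partitions `μ, ν` with `λ = eμ + ν` part-wise one has `μ ≤ λ'` and `ν ≥ λ''` part-wise;
in particular `|μ| ≤ |λ'|`, i.e. `|λ'|` is maximal among all such decompositions. -/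
theorem corestricted_decomposition_is_extremal (e : ℕ) (he : 1 ≤ e)
    (lam lam' lam'' : Partn)
    (hdec : ∀ k, lam.part k = e * lam'.part k + lam''.part k)
    (hcor : ∀ h, lam''.part h ≤ lam''.part (h + 1) + (e - 1))
    (μ ν : Partn) (hμν : ∀ k, lam.part k = e * μ.part k + ν.part k) :
    (∀ k, μ.part k ≤ lam'.part k) ∧ (∀ k, lam''.part k ≤ ν.part k) ∧
      μ.size ≤ lam'.size := by
  have key : ∀ k, μ.part k ≤ lam'.part k := by
    intro k
    by_contra h
    push_neg at h
    have step : ∀ j, lam'.part (k + j) < μ.part (k + j) := by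
      intro j
      induction j with
      | zero => simpa using h
      | succ j ih =>
        have e1 := hdec (k + j); have e2 := hμν (k + j)
        have e3 := hdec (k + j + 1); have e4 := hμν (k + j + 1)
        have hc := hcor (k + j)
        have hν := ν.antitone (k + j)
        have h1 : e * (lam'.part (k + j) + 1) ≤ e * μ.part (k + j) :=
          Nat.mul_le_mul_left e (Nat.succ_le_of_lt ih)
        have h1' : e * lam'.part (k + j) + e ≤ e * μ.part (k + j) := by
          rw [Nat.mul_add, Nat.mul_one] at h1; exact h1
        have hν1 : ν.part (k + j) + e ≤ lam''.part (k + j) := by omega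
        have hν2 : ν.part (k + j + 1) + 1 ≤ lam''.part (k + j + 1) := by omega
        have hm : e * lam'.part (k + j + 1) < e * μ.part (k + j + 1) := by omega
        exact Nat.lt_of_mul_lt_mul_left hm
    obtain ⟨N, hN⟩ := μ.finite
    have h0 : μ.part (k + N) = 0 := hN _ (by omega)
    have := step N
    omega
  refine ⟨key, ?_, ?_⟩
  · intro k
    have h1 : e * μ.part k ≤ e * lam'.part k := Nat.mul_le_mul_left e (key k)
    have e1 := hdec k; have e2 := hμν k
    omega
  · set Nμ := Classical.choose μ.finite with hNμ
    set N' := Classical.choose lam'.finite with hN'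
    rw [μ.size_eq (max Nμ N') (le_max_left _ _),
        lam'.size_eq (max Nμ N') (le_max_right _ _)]
    exact Finset.sum_le_sum fun i _ => key i
end

section
/- If μ and ν are Young diagrams with |μ| > 2 such that a Young diagram ρ is covered by μ if and only if ρ is covered by ν, then μ = ν. In other words, a Young diagram with more than two cells is uniquely determined by the collection of diagrams obtained from it by removing a single box. -/
/-- A Young diagram `ν` is covered by `μ`: `ν ⊆ μ` and `|μ| = |ν| + 1`. -/
def CoveredBy (ν μ : YoungDiagram) : Prop :=
  ν ≤ μ ∧ μ.card = ν.card + 1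

namespace CoveredByAux

/-- A cell of `μ` that can be removed leaving a Young diagram. -/
def Removable (μ : YoungDiagram) (c : ℕ × ℕ) : Prop :=
  c ∈ μ ∧ (c.1, c.2 + 1) ∉ μ ∧ (c.1 + 1, c.2) ∉ μ

/-- Removing a removable cell gives a Young diagram. -/
def erase (μ : YoungDiagram) (c : ℕ × ℕ) (hc : Removable μ c) : YoungDiagram where
  cells := μ.cells.erase c
  isLowerSet := by
    intro a b hba ha
    simp only [Finset.coe_erase, Set.mem_diff, Finset.mem_coe, YoungDiagram.mem_cells,
      Set.mem_singleton_iff] at ha ⊢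
    refine ⟨μ.isLowerSet hba ha.1, ?_⟩
    rintro rfl
    rcases lt_or_eq_of_le hba.1 with h1 | h1
    · exact hc.2.2 (μ.up_left_mem h1 hba.2 ha.1)
    rcases lt_or_eq_of_le hba.2 with h2 | h2
    · exact hc.2.1 (μ.up_left_mem hba.1 h2 ha.1)
    exact ha.2 (Prod.ext h1 h2).symm

@[simp] lemma mem_erase {μ : YoungDiagram} {c x : ℕ × ℕ} {hc : Removable μ c} :
    x ∈ erase μ c hc ↔ x ≠ c ∧ x ∈ μ := by
  change x ∈ μ.cells.erase c ↔ _
  simp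

lemma coveredBy_erase (μ : YoungDiagram) (c : ℕ × ℕ) (hc : Removable μ c) :
    CoveredBy (erase μ c hc) μ := by
  constructor
  · rw [← YoungDiagram.cells_subset_iff]
    exact Finset.erase_subset _ _
  · change μ.cells.card = (μ.cells.erase c).card + 1
    rw [Finset.card_erase_of_mem hc.1]
    have : 0 < μ.cells.card := Finset.card_pos.mpr ⟨c, hc.1⟩
    omega

lemma removable_of_descent (μ : YoungDiagram) {k : ℕ}
    (h : μ.rowLen (k + 1) < μ.rowLen k) : Removable μ (k, μ.rowLen k - 1) := by
  refine ⟨YoungDiagram.mem_iff_lt_rowLen.mpr (by omega), ?_, ?_⟩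
  · show (k, μ.rowLen k - 1 + 1) ∉ μ
    rw [YoungDiagram.mem_iff_lt_rowLen]; omega
  · show (k + 1, μ.rowLen k - 1) ∉ μ
    rw [YoungDiagram.mem_iff_lt_rowLen]; omega

lemma rowLen_colLen_zero (μ : YoungDiagram) : μ.rowLen (μ.colLen 0) = 0 := by
  by_contra hpos
  have : (μ.colLen 0, 0) ∈ μ := by
    rw [YoungDiagram.mem_iff_lt_rowLen]; omega
  rw [YoungDiagram.mem_iff_lt_colLen] at this
  omega

lemma exists_removable (μ : YoungDiagram) (h : 0 < μ.card) : ∃ c, Removable μ c := by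
  by_contra hno
  push_neg at hno
  have hdes : ∀ k, μ.rowLen (k + 1) = μ.rowLen k := by
    intro k
    rcases lt_or_eq_of_le (μ.rowLen_anti k (k + 1) (by omega)) with hlt | heq
    · exact absurd (removable_of_descent μ hlt) (hno _)
    · exact heq
  have hconst : ∀ k, μ.rowLen k = μ.rowLen 0 := by
    intro k; induction k with
    | zero => rfl
    | succ n ih => rw [hdes n, ih]
  have h0 : 0 < μ.rowLen 0 := by
    obtain ⟨x, hx⟩ := Finset.card_pos.mp h
    have : (0, 0) ∈ μ := μ.up_left_mem (Nat.zero_le _) (Nat.zero_le _) hx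
    rwa [YoungDiagram.mem_iff_lt_rowLen] at this
  have := rowLen_colLen_zero μ
  rw [hconst (μ.colLen 0)] at this
  omega

/-- A diagram with a unique removable cell is a rectangle. -/
lemma rect (μ : YoungDiagram) {i j : ℕ} (hij : Removable μ (i, j))
    (huniq : ∀ c, Removable μ c → c = (i, j)) :
    ∀ x : ℕ × ℕ, x ∈ μ ↔ x.1 ≤ i ∧ x.2 ≤ j := by
  have hri : μ.rowLen i = j + 1 := by
    have h1 : j < μ.rowLen i := YoungDiagram.mem_iff_lt_rowLen.mp hij.1
    have h2 : ¬ (j + 1 < μ.rowLen i) :=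
      fun hh => hij.2.1 (YoungDiagram.mem_iff_lt_rowLen.mpr hh)
    omega
  have hdes : ∀ k, μ.rowLen (k + 1) < μ.rowLen k → k = i := by
    intro k hk
    have := huniq _ (removable_of_descent μ hk)
    exact (Prod.mk.injEq _ _ _ _).mp this |>.1
  have hstep : ∀ k, k ≠ i → μ.rowLen (k + 1) = μ.rowLen k := by
    intro k hk
    rcases lt_or_eq_of_le (μ.rowLen_anti k (k + 1) (by omega)) with hlt | heq
    · exact absurd (hdes k hlt) hk
    · exact heq
  -- rows at or above i have length j+1
  have hup : ∀ m, m ≤ i → μ.rowLen (i - m) = j + 1 := by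
    intro m
    induction m with
    | zero => intro _; simpa using hri
    | succ n ih =>
      intro hn
      have h1 : i - (n + 1) ≠ i := by omega
      have h2 : i - (n + 1) + 1 = i - n := by omega
      rw [← hstep _ h1, h2]
      exact ih (by omega)
  -- rows below i are empty
  have hdown : ∀ m, μ.rowLen (i + 1 + m) = μ.rowLen (i + 1) := by
    intro m
    induction m with
    | zero => rfl
    | succ n ih =>
      have h1 : i + 1 + n ≠ i := by omega
      rw [show i + 1 + (n + 1) = (i + 1 + n) + 1 by omega, hstep _ h1, ih]
  have hlow : μ.rowLen (i + 1) = 0 := by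
    by_contra hpos
    have hcl := rowLen_colLen_zero μ
    rcases le_or_gt (μ.colLen 0) (i + 1) with hle | hlt
    · have := μ.rowLen_anti _ _ hle
      omega
    · have := hdown (μ.colLen 0 - (i + 1))
      rw [show i + 1 + (μ.colLen 0 - (i + 1)) = μ.colLen 0 by omega] at this
      omega
  rintro ⟨a, b⟩
  show (a, b) ∈ μ ↔ a ≤ i ∧ b ≤ j
  rw [YoungDiagram.mem_iff_lt_rowLen]
  rcases le_or_gt a i with ha | ha
  · have := hup (i - a) (by omega)
    rw [show i - (i - a) = a by omega] at this
    omega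
  · have h1 := μ.rowLen_anti (i + 1) a (by omega)
    omega

lemma rect_card (μ : YoungDiagram) {i j : ℕ}
    (hrect : ∀ x : ℕ × ℕ, x ∈ μ ↔ x.1 ≤ i ∧ x.2 ≤ j) :
    μ.card = (i + 1) * (j + 1) := by
  have : μ.cells = Finset.range (i + 1) ×ˢ Finset.range (j + 1) := by
    ext ⟨a, b⟩
    rw [Finset.mem_product, YoungDiagram.mem_cells, hrect]
    simp only [Finset.mem_range]
    omega
  change μ.cells.card = _
  rw [this, Finset.card_product, Finset.card_range, Finset.card_range]

end CoveredByAux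

open CoveredByAux in
/-- A Young diagram with more than two cells is determined by the collection of
diagrams obtained from it by removing one box: if `μ` and `ν` cover exactly the same
diagrams and `|μ| > 2`, then `μ = ν`. -/
theorem eq_of_same_covered (μ ν : YoungDiagram) (hcard : 2 < μ.card)
    (h : ∀ ρ : YoungDiagram, CoveredBy ρ μ ↔ CoveredBy ρ ν) :
    μ = ν := by
  by_contra hne
  -- the two diagrams have the same cardinality
  obtain ⟨c₀, hc₀⟩ := exists_removable μ (by omega)
  have hcov₀ := coveredBy_erase μ c₀ hc₀
  have hcovν₀ := (h _).mp hcov₀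
  have hcards : ν.card = μ.card := by rw [hcovν₀.2, hcov₀.2]
  -- there are cells on both sides of the symmetric difference
  have hext : ∀ {α β : YoungDiagram}, α.card = β.card → α.cells ⊆ β.cells → α = β := by
    intro α β hc hsub
    exact YoungDiagram.ext (Finset.eq_of_subset_of_card_le hsub (le_of_eq hc.symm))
  obtain ⟨b, hbμ, hbν⟩ : ∃ b, b ∈ μ.cells ∧ b ∉ ν.cells := by
    by_contra hn
    push_neg at hn
    exact hne (hext hcards.symm (fun x hx => hn x hx))
  obtain ⟨b', hb'ν, hb'μ⟩ : ∃ b', b' ∈ ν.cells ∧ b' ∉ μ.cells := by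
    by_contra hn
    push_neg at hn
    exact hne (hext hcards (fun x hx => hn x hx)).symm
  rw [YoungDiagram.mem_cells] at hbμ hbν hb'ν hb'μ
  -- b is the unique removable cell of μ
  have huniqμ : ∀ c, Removable μ c → c = b := by
    intro c hc
    by_contra hne'
    have hcov := coveredBy_erase μ c hc
    have hle := ((h _).mp hcov).1
    have hb : b ∈ (erase μ c hc).cells := by
      rw [YoungDiagram.mem_cells, mem_erase]
      exact ⟨fun e => hne' e.symm, hbμ⟩
    exact hbν (YoungDiagram.cells_subset_iff.mpr hle hb)
  have huniqν : ∀ c, Removable ν c → c = b' := by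
    intro c hc
    by_contra hne'
    have hcov := coveredBy_erase ν c hc
    have hle := ((h _).mpr hcov).1
    have hb : b' ∈ (erase ν c hc).cells := by
      rw [YoungDiagram.mem_cells, mem_erase]
      exact ⟨fun e => hne' e.symm, hb'ν⟩
    exact hb'μ (YoungDiagram.cells_subset_iff.mpr hle hb)
  have hrb : Removable μ b := by
    obtain ⟨c, hc⟩ := exists_removable μ (by omega)
    rwa [huniqμ c hc] at hc
  have hrb' : Removable ν b' := by
    obtain ⟨c, hc⟩ := exists_removable ν (by omega)
    rwa [huniqν c hc] at hc
  -- the unique covered diagrams coincide : μ.cells.erase b = ν.cells.erase b'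
  have hcells : μ.cells.erase b = ν.cells.erase b' := by
    have hcov := coveredBy_erase μ b hrb
    have hcovν := (h _).mp hcov
    have hsubν := YoungDiagram.cells_subset_iff.mpr hcovν.1
    have hsub : μ.cells.erase b ⊆ ν.cells.erase b' := by
      intro x hx
      rw [Finset.mem_erase] at hx ⊢
      refine ⟨?_, hsubν (Finset.mem_erase.mpr hx)⟩
      rintro rfl
      exact hb'μ hx.2
    have hcards' : ν.cells.card = μ.cells.card := hcards
    refine Finset.eq_of_subset_of_card_le hsub ?_
    rw [Finset.card_erase_of_mem (by rwa [YoungDiagram.mem_cells]),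
      Finset.card_erase_of_mem (by rwa [YoungDiagram.mem_cells])]
    omega
  have hkey : ∀ x : ℕ × ℕ, (x ≠ b ∧ x ∈ μ) ↔ (x ≠ b' ∧ x ∈ ν) := by
    intro x
    have := Finset.ext_iff.mp hcells x
    simpa [Finset.mem_erase] using this
  -- both diagrams are rectangles
  obtain ⟨i, j⟩ := b
  obtain ⟨i', j'⟩ := b'
  have hrμ := rect μ hrb huniqμ
  have hrν := rect ν hrb' huniqν
  have hcμ := rect_card μ hrμ
  have hcν := rect_card ν hrν
  have hK : ∀ a c : ℕ, ((a = i → ¬c = j) ∧ (a ≤ i ∧ c ≤ j)) ↔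
      ((a = i' → ¬c = j') ∧ (a ≤ i' ∧ c ≤ j')) := by
    intro a c
    have := hkey (a, c)
    rw [hrμ, hrν] at this
    simpa [Prod.ext_iff] using this
  have hA : ¬(i = 0 ∧ j = 1) := by
    rintro ⟨rfl, rfl⟩
    rw [hcμ] at hcard
    omega
  have hB : ¬(i' = 0 ∧ j' = 1) := by
    rintro ⟨rfl, rfl⟩
    rw [hcν] at hcards
    omega
  have hne2 : i ≠ i' ∨ j ≠ j' := by
    by_contra hn
    push_neg at hn
    exact hbν (hn.1 ▸ hn.2 ▸ hb'ν)
  have k1 := hK i' j'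
  have k2 := hK i j
  have k3 := hK i' 0
  have k4 := hK 0 j
  have k5 := hK 0 j'
  have k6 := hK i 0
  have k7 := hK 1 0
  have k8 := hK 0 1
  omega
end

section
/- Let σ be a bijection of the set of all Young diagrams onto itself such that |σ(μ)| = |μ| for every Young diagram μ, and such that for all Young diagrams μ, ν: ν is covered by μ if and only if σ(ν) is covered by σ(μ). Then either σ(μ) = μ for all μ, or σ(μ) = μᵀ for all μ. In other words, the only rank-preserving automorphisms of the branching graph (Young's lattice) are the identity and transposition. -/
/-!
A Young diagram with at least three cells is determined by the diagrams it covers: if it covers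
two of them it is their union, and if it covers only one, `ν`, it is a rectangle, of which at most
one covers `ν` once `|ν| ≥ 2`. So, by induction on size, an automorphism that fixes the two
dominoes fixes everything. An automorphism either fixes the dominoes or swaps them, and in the
second case its composite with transposition fixes them.
-/

-- `(0, 1)` and `(1, 0)` are the only two distinct cells with the same strict lower bounds.
lemma Nat.prod_eq_of_forall_lt_iff {x y : ℕ × ℕ} (h : ∀ d, d < x ↔ d < y) {d : ℕ × ℕ}
    (hd : d < x) (hd₀ : d ≠ 0) : x = y := by
  have hdy := (h d).1 hd
  obtain ⟨x₁, x₂⟩ := x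
  obtain ⟨y₁, y₂⟩ := y
  obtain ⟨d₁, d₂⟩ := d
  have hx₁ := h (x₁ - 1, x₂)
  have hx₂ := h (x₁, x₂ - 1)
  have hy₁ := h (y₁ - 1, y₂)
  have hy₂ := h (y₁, y₂ - 1)
  have hxy := h (x₁, x₂)
  have hyx := h (y₁, y₂)
  simp only [Prod.lt_iff, Prod.mk_eq_zero, Prod.mk.injEq, ne_eq] at *
  omega

namespace YoungDiagram

lemma card_lt_card {ν μ : YoungDiagram} (h : ν < μ) : ν.card < μ.card :=
  Finset.card_lt_card (cells_ssubset_iff.2 h)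

lemma eq_of_le_of_card_le {ν μ : YoungDiagram} (h : ν ≤ μ) (hcard : μ.card ≤ ν.card) :
    ν = μ :=
  by_contra fun hne ↦ (card_lt_card (h.lt_of_ne hne)).not_ge hcard

lemma card_transpose (μ : YoungDiagram) : μ.transpose.card = μ.card :=
  Finset.card_map _

lemma zero_mem_of_mem {μ : YoungDiagram} {c : ℕ × ℕ} (hc : c ∈ μ) : 0 ∈ μ :=
  μ.isLowerSet zero_le hc

lemma eq_of_card_eq_of_card_le_one {μ μ' : YoungDiagram} (h : μ.card = μ'.card)
    (h₁ : μ.card ≤ 1) : μ = μ' := by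
  refine eq_of_le_of_card_le (fun c hc ↦ ?_) h.ge
  have hc₀ : c = 0 :=
    Finset.card_le_one.1 h₁ _ ((mem_cells _).2 hc) _ ((mem_cells _).2 (zero_mem_of_mem hc))
  have hpos : 0 < μ.card := Finset.card_pos.2 ⟨c, (mem_cells _).2 hc⟩
  obtain ⟨d, hd⟩ := Finset.card_pos.1 (show 0 < μ'.card by omega)
  exact hc₀ ▸ zero_mem_of_mem ((mem_cells _).1 hd)

def Iic (x : ℕ × ℕ) : YoungDiagram :=
  ⟨Finset.Iic x, by simpa using isLowerSet_Iic x⟩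

lemma mem_Iic {x c : ℕ × ℕ} : c ∈ Iic x ↔ c ≤ x := by
  simp [Iic, ← mem_cells]

lemma Iic_le_iff {x : ℕ × ℕ} {μ : YoungDiagram} : Iic x ≤ μ ↔ x ∈ μ :=
  ⟨fun h ↦ h (mem_Iic.2 le_rfl), fun h _ hc ↦ μ.isLowerSet (mem_Iic.1 hc) h⟩

lemma Iic_inj {x y : ℕ × ℕ} : Iic x = Iic y ↔ x = y :=
  ⟨fun h ↦ (mem_Iic.1 (h ▸ Iic_le_iff.1 le_rfl)).antisymm (mem_Iic.1 (h ▸ Iic_le_iff.1 le_rfl)),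
    congrArg Iic⟩

lemma transpose_Iic (x : ℕ × ℕ) : (Iic x).transpose = Iic x.swap := by
  ext c
  rw [mem_cells, mem_cells, mem_transpose, mem_Iic, mem_Iic, Prod.le_def, Prod.le_def, and_comm]
  rfl

lemma eq_Iic_or_eq_Iic_of_card_eq_two {μ : YoungDiagram} (h : μ.card = 2) :
    μ = Iic (0, 1) ∨ μ = Iic (1, 0) := by
  obtain ⟨d, hd, hd₀⟩ := Finset.exists_mem_ne (show 1 < μ.card by omega) 0
  have hle : (0, 1) ≤ d ∨ (1, 0) ≤ d := by
    obtain ⟨d₁, d₂⟩ := d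
    simp only [Prod.mk_le_mk, ne_eq, Prod.mk_eq_zero] at hd₀ ⊢
    omega
  have hIic : ∀ x ≤ d, (Iic x).card = 2 → μ = Iic x := fun x hx hx₂ ↦ .symm <|
    eq_of_le_of_card_le (Iic_le_iff.2 (μ.isLowerSet hx ((mem_cells _).1 hd))) (by rw [h, hx₂])
  exact hle.imp (hIic _ · rfl) (hIic _ · rfl)

def erase (μ : YoungDiagram) (c : ℕ × ℕ) (hc : Maximal (· ∈ μ) c) : YoungDiagram :=
  ⟨μ.cells.erase c, fun a b hba ha ↦ by
    simp only [Finset.coe_erase, Set.mem_sdiff, Finset.mem_coe, mem_cells,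
      Set.mem_singleton_iff] at ha ⊢
    exact ⟨μ.isLowerSet hba ha.1, by rintro rfl; exact ha.2 (hc.eq_of_le ha.1 hba).symm⟩⟩

end YoungDiagram

open YoungDiagram

lemma CoveredBy.covBy {ν μ : YoungDiagram} (h : CoveredBy ν μ) : ν ⋖ μ := by
  refine ⟨h.1.lt_of_ne ?_, fun ρ hνρ hρμ ↦ ?_⟩
  · rintro rfl; exact absurd h.2 (by omega)
  · have := card_lt_card hνρ; have := card_lt_card hρμ; have := h.2; omega

lemma coveredBy_transpose_iff {ν μ : YoungDiagram} :
    CoveredBy ν.transpose μ.transpose ↔ CoveredBy ν μ := by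
  rw [CoveredBy, CoveredBy, transpose_le_iff, card_transpose, card_transpose]

lemma coveredBy_erase {μ : YoungDiagram} {c : ℕ × ℕ} (hc : Maximal (· ∈ μ) c) :
    CoveredBy (μ.erase c hc) μ :=
  ⟨fun _ hd ↦ Finset.mem_of_mem_erase hd, (Finset.card_erase_add_one ((mem_cells _).2 hc.1)).symm⟩

lemma CoveredBy.exists_mem_iff_eq_or_mem {ν μ : YoungDiagram} (h : CoveredBy ν μ) :
    ∃ x ∉ ν, ∀ d, d ∈ μ ↔ d = x ∨ d ∈ ν := by
  classical
  obtain ⟨x, hx, hμ⟩ := Finset.exists_eq_insert_iff.2 ⟨fun _ hd ↦ h.1 hd, h.2.symm⟩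
  exact ⟨x, fun h ↦ hx ((mem_cells _).2 h), fun d ↦ by simp [← mem_cells, ← hμ]⟩

lemma exists_eq_Iic_of_forall_coveredBy_eq {ν μ : YoungDiagram} (h : CoveredBy ν μ)
    (huniq : ∀ ρ, CoveredBy ρ μ → ρ = ν) : ∃ x, μ = Iic x ∧ ∀ d, d ∈ ν ↔ d < x := by
  obtain ⟨x, hxν, hμ⟩ := h.exists_mem_iff_eq_or_mem
  have hlt : ∀ d ∈ ν, d < x := by
    intro d hd
    obtain ⟨c, hdc, hc⟩ := ν.cells.exists_le_maximal ((mem_cells _).2 hd)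
    -- otherwise `c` is a removable corner of `μ` and `μ.erase c` a second lower cover
    refine hdc.trans_lt (not_not.1 fun hcx ↦ ?_)
    have hcμ : Maximal (· ∈ μ) c := by
      refine maximal_iff_forall_gt.2 ⟨(hμ c).2 (.inr ((mem_cells _).1 hc.1)), fun e hce he ↦ ?_⟩
      rcases (hμ e).1 he with rfl | he
      · exact hcx hce
      · exact hc.not_gt ((mem_cells _).2 he) hce
    have := huniq _ (coveredBy_erase hcμ)
    exact Finset.notMem_erase c μ.cells (show c ∈ (μ.erase c hcμ).cells from this ▸ hc.1)
  refine ⟨x, ?_, fun d ↦ ⟨hlt d, fun hd ↦ ?_⟩⟩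
  · ext d
    rw [mem_cells, mem_cells, mem_Iic]
    refine ⟨fun hd ↦ ?_, fun hd ↦ μ.isLowerSet hd ((hμ x).2 (.inl rfl))⟩
    rcases (hμ d).1 hd with rfl | hd
    exacts [le_rfl, (hlt d hd).le]
  · exact ((hμ d).1 (μ.isLowerSet hd.le ((hμ x).2 (.inl rfl)))).resolve_left hd.ne

lemma eq_of_forall_coveredBy_eq {ν μ₁ μ₂ : YoungDiagram} (hν : 2 ≤ ν.card)
    (h₁ : CoveredBy ν μ₁) (h₂ : CoveredBy ν μ₂)
    (hu₁ : ∀ ρ, CoveredBy ρ μ₁ → ρ = ν) (hu₂ : ∀ ρ, CoveredBy ρ μ₂ → ρ = ν) : μ₁ = μ₂ := by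
  obtain ⟨x, rfl, hx⟩ := exists_eq_Iic_of_forall_coveredBy_eq h₁ hu₁
  obtain ⟨y, rfl, hy⟩ := exists_eq_Iic_of_forall_coveredBy_eq h₂ hu₂
  obtain ⟨d, hd, hd₀⟩ := Finset.exists_mem_ne hν 0
  exact Iic_inj.2 <| Nat.prod_eq_of_forall_lt_iff (fun e ↦ (hx e).symm.trans (hy e))
    ((hx d).1 ((mem_cells _).1 hd)) hd₀

lemma eq_of_forall_coveredBy_iff {μ μ' : YoungDiagram} (hμ : 3 ≤ μ.card)
    (h : ∀ ρ, CoveredBy ρ μ ↔ CoveredBy ρ μ') : μ = μ' := by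
  obtain ⟨c, hc⟩ := μ.cells.exists_maximal (Finset.card_pos.1 (show 0 < μ.card by omega))
  replace hc : Maximal (· ∈ μ) c := by simpa only [mem_cells] using hc
  have hν := coveredBy_erase hc
  by_cases hu : ∀ ρ, CoveredBy ρ μ → ρ = μ.erase c hc
  · exact eq_of_forall_coveredBy_eq (by have := hν.2; omega) hν ((h _).1 hν) hu
      fun ρ hρ ↦ hu ρ ((h ρ).2 hρ)
  · push Not at hu
    obtain ⟨ρ, hρ, hne⟩ := hu
    calc μ = ρ ⊔ μ.erase c hc := (hρ.covBy.wcovBy.sup_eq hν.covBy.wcovBy hne).symm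
      _ = μ' := ((h ρ).1 hρ).covBy.wcovBy.sup_eq ((h _).1 hν).covBy.wcovBy hne

lemma eq_self_of_forall_card_eq_two {σ : YoungDiagram → YoungDiagram} (hbij : Function.Bijective σ)
    (hcard : ∀ μ : YoungDiagram, (σ μ).card = μ.card)
    (hcov : ∀ μ ν : YoungDiagram, CoveredBy ν μ ↔ CoveredBy (σ ν) (σ μ))
    (h₂ : ∀ μ : YoungDiagram, μ.card = 2 → σ μ = μ)
    (μ : YoungDiagram) : σ μ = μ := by
  induction hn : μ.card using Nat.strong_induction_on generalizing μ with
  | _ n ih =>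
  rcases (by omega : n ≤ 1 ∨ n = 2 ∨ 3 ≤ n) with hn₁ | rfl | hn₃
  · exact eq_of_card_eq_of_card_le_one (hcard μ) (by rw [hcard]; omega)
  · exact h₂ μ hn
  have hfix : ∀ ρ, CoveredBy ρ μ → σ ρ = ρ := fun ρ hρ ↦ ih _ (by have := hρ.2; omega) ρ rfl
  refine (eq_of_forall_coveredBy_iff (by omega) fun ρ ↦ ⟨fun hρ ↦ ?_, fun hρ ↦ ?_⟩).symm
  · simpa only [hfix ρ hρ] using (hcov μ ρ).1 hρ
  · obtain ⟨τ, rfl⟩ := hbij.2 ρ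
    have hτ := (hcov μ τ).2 hρ
    rwa [hfix τ hτ]

lemma eq_self_of_apply_Iic_eq {σ : YoungDiagram → YoungDiagram} (hbij : Function.Bijective σ)
    (hcard : ∀ μ : YoungDiagram, (σ μ).card = μ.card)
    (hcov : ∀ μ ν : YoungDiagram, CoveredBy ν μ ↔ CoveredBy (σ ν) (σ μ))
    (h : σ (Iic (0, 1)) = Iic (0, 1)) (μ : YoungDiagram) : σ μ = μ := by
  refine eq_self_of_forall_card_eq_two hbij hcard hcov (fun ν hν ↦ ?_) μ
  have h' : σ (Iic (1, 0)) = Iic (1, 0) :=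
    (eq_Iic_or_eq_Iic_of_card_eq_two (by rw [hcard]; rfl)).resolve_left
      fun h' ↦ absurd (Iic_inj.1 (hbij.1 (h'.trans h.symm))) (by decide)
  rcases eq_Iic_or_eq_Iic_of_card_eq_two hν with rfl | rfl
  exacts [h, h']

/-- The only rank-preserving automorphisms of Young's lattice (the branching graph of
Young diagrams with the covering relation) are the identity and the transposition. -/
theorem young_lattice_automorphisms (σ : YoungDiagram → YoungDiagram)
    (hbij : Function.Bijective σ)
    (hcard : ∀ μ : YoungDiagram, (σ μ).card = μ.card)
    (hcov : ∀ μ ν : YoungDiagram, CoveredBy ν μ ↔ CoveredBy (σ ν) (σ μ)) :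
    (∀ μ : YoungDiagram, σ μ = μ) ∨ (∀ μ : YoungDiagram, σ μ = μ.transpose) := by
  rcases eq_Iic_or_eq_Iic_of_card_eq_two (μ := σ (Iic (0, 1))) (by rw [hcard]; rfl) with h | h
  · exact .inl (eq_self_of_apply_Iic_eq hbij hcard hcov h)
  · refine .inr fun μ ↦ transpose_eq_iff_eq_transpose.1 ?_
    refine eq_self_of_apply_Iic_eq (σ := fun μ ↦ (σ μ).transpose)
      ((Function.Involutive.bijective transpose_transpose).comp hbij)
      (fun μ ↦ (card_transpose _).trans (hcard μ))
      (fun μ ν ↦ (hcov μ ν).trans coveredBy_transpose_iff.symm) ?_ μ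
    rw [h, transpose_Iic]
    rfl
end
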